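/- Let a_1, ..., a_p and b_1, ..., b_q be real numbers, and let j, k be integers with 1 <= j <= p and 1 <= k <= q. Let A denote the mean of the j largest a's, B the mean of the k largest b's, and C the mean of the (j+k) largest values of the combined list a_1, ..., a_p, b_1, ..., b_q. Then C >= (j*A + k*B)/(j+k) >= min(A, B). In particular, if A > B then C >= B; i.e., if the mean of the top n^+ tau positive scores exceeds the mean of the top n^- tau negative scores, the TopMean threshold is at least the TopMean-NP threshold. -/

import Mathlib

/-- The sum of the `k` largest elements of a finite multiset of reals
(counted with multiplicity). -/
noncomputable def sumTopK (s : Multiset ℝ) (k : ℕ) : ℝ :=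
  ((s.sort (· ≤ ·)).drop (Multiset.card s - k)).sum

/-- The mean of the `k` largest elements of a finite multiset of reals. -/
noncomputable def meanTopK (s : Multiset ℝ) (k : ℕ) : ℝ :=
  sumTopK s k / k

/-!
The sum of the `k` largest elements of `s` is the largest sum of a sub-multiset of `s` of size `k`.
Choosing the top `j` elements of `s` and the top `k` of `t` gives a sub-multiset of `s + t` of size
`j + k`, so `sumTopK s j + sumTopK t k ≤ sumTopK (s + t) (j + k)`. Dividing by `j + k` shows that
`C` is at least the weighted mean `(j A + k B) / (j + k)`, which is at least `min A B`.
-/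

namespace List

variable {α : Type*} [AddCommMonoid α] [Preorder α] [IsOrderedAddMonoid α]

theorem add_sum_drop_le_sum_drop_cons {x : α} {l : List α} (hx : ∀ y ∈ l, x ≤ y) {d : ℕ}
    (hd : d ≤ l.length) : x + (l.drop d).sum ≤ ((x :: l).drop d).sum := by
  cases d with
  | zero => simp
  | succ e =>
    rw [drop_succ_cons, drop_eq_getElem_cons (Nat.lt_of_succ_le hd), sum_cons]
    exact add_le_add_left (hx _ (getElem_mem _)) _

theorem Sublist.sum_le_sum_drop {l m : List α} (h : m <+ l) (hl : l.Pairwise (· ≤ ·)) :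
    m.sum ≤ (l.drop (l.length - m.length)).sum := by
  induction h with
  | slnil => simp
  | @cons m l x h ih =>
    have hlen : (x :: l).length - m.length = l.length - m.length + 1 := by
      simp only [length_cons]; have := h.length_le; omega
    rw [hlen, drop_succ_cons]
    exact ih hl.of_cons
  | @cons_cons m l x h ih =>
    obtain ⟨hx, hl⟩ := pairwise_cons.mp hl
    calc (x :: m).sum = x + m.sum := sum_cons
      _ ≤ x + (l.drop (l.length - m.length)).sum := add_le_add_right (ih hl) x
      _ ≤ ((x :: l).drop (l.length - m.length)).sum :=
        add_sum_drop_le_sum_drop_cons hx (Nat.sub_le _ _)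
      _ = _ := by simp

end List

theorem Multiset.sum_le_sumTopK_card {s u : Multiset ℝ} (h : u ≤ s) :
    u.sum ≤ sumTopK s (card u) := by
  have hsub : u.toList.Subperm (s.sort (· ≤ ·)) := by
    rwa [← coe_le, coe_toList, sort_eq]
  obtain ⟨m, hm, hms⟩ := hsub
  have := hms.sum_le_sum_drop (pairwise_sort s _)
  rwa [hm.length_eq, hm.sum_eq, length_toList, sum_toList, length_sort] at this

theorem Multiset.exists_le_card_eq_sum_eq_sumTopK (s : Multiset ℝ) {k : ℕ} (hk : k ≤ card s) :
    ∃ u ≤ s, card u = k ∧ u.sum = sumTopK s k := by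
  refine ⟨((s.sort (· ≤ ·)).drop (card s - k) : List ℝ), ?_, ?_, rfl⟩
  · conv_rhs => rw [← sort_eq s (· ≤ ·)]
    exact coe_le.mpr (List.drop_sublist _ _).subperm
  · simp only [coe_card, List.length_drop, length_sort]
    omega

theorem sumTopK_add_sumTopK_le {s t : Multiset ℝ} {j k : ℕ} (hj : j ≤ Multiset.card s)
    (hk : k ≤ Multiset.card t) :
    sumTopK s j + sumTopK t k ≤ sumTopK (s + t) (j + k) := by
  obtain ⟨u, hu, rfl, hus⟩ := s.exists_le_card_eq_sum_eq_sumTopK hj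
  obtain ⟨v, hv, rfl, hvt⟩ := t.exists_le_card_eq_sum_eq_sumTopK hk
  rw [← hus, ← hvt, ← Multiset.sum_add, ← Multiset.card_add]
  exact Multiset.sum_le_sumTopK_card (add_le_add hu hv)

theorem sumTopK_zero (s : Multiset ℝ) : sumTopK s 0 = 0 := by
  rw [sumTopK, Nat.sub_zero, List.drop_eq_nil_of_le (Multiset.length_sort _).le, List.sum_nil]

theorem natCast_mul_meanTopK (s : Multiset ℝ) (k : ℕ) : (k : ℝ) * meanTopK s k = sumTopK s k := by
  rcases eq_or_ne k 0 with rfl | hk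
  · simp [sumTopK_zero]
  · rw [meanTopK, mul_div_cancel₀ _ (Nat.cast_ne_zero.mpr hk)]

theorem weightedMean_meanTopK_le_meanTopK_add {s t : Multiset ℝ} {j k : ℕ}
    (hj : j ≤ Multiset.card s) (hk : k ≤ Multiset.card t) :
    ((j : ℝ) * meanTopK s j + (k : ℝ) * meanTopK t k) / ((j : ℝ) + (k : ℝ)) ≤
      meanTopK (s + t) (j + k) := by
  rw [natCast_mul_meanTopK, natCast_mul_meanTopK, meanTopK, Nat.cast_add]
  exact div_le_div_of_nonneg_right (sumTopK_add_sumTopK_le hj hk) (by positivity)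

theorem min_le_weightedMean {x y a b : ℝ} (ha : 0 ≤ a) (hb : 0 ≤ b) (hab : 0 < a + b) :
    min x y ≤ (a * x + b * y) / (a + b) := by
  rw [le_div_iff₀ hab]
  nlinarith [min_le_left x y, min_le_right x y]

theorem meanTopK_combined_ge_general {p q : ℕ} (a : Fin p → ℝ) (b : Fin q → ℝ)
    (j k : ℕ) (hj1 : 1 ≤ j) (hjp : j ≤ p) (hkq : k ≤ q)
    (A B C : ℝ)
    (hA : A = meanTopK (Multiset.map a Finset.univ.val) j)
    (hB : B = meanTopK (Multiset.map b Finset.univ.val) k)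
    (hC : C = meanTopK (Multiset.map a Finset.univ.val + Multiset.map b Finset.univ.val)
      (j + k)) :
    ((j : ℝ) * A + (k : ℝ) * B) / ((j : ℝ) + (k : ℝ)) ≤ C ∧
    min A B ≤ ((j : ℝ) * A + (k : ℝ) * B) / ((j : ℝ) + (k : ℝ)) ∧
    (B < A → B ≤ C) := by
  have hC_ge : ((j : ℝ) * A + (k : ℝ) * B) / ((j : ℝ) + (k : ℝ)) ≤ C := by
    subst hA hB hC
    exact weightedMean_meanTopK_le_meanTopK_add (by simpa using hjp) (by simpa using hkq)
  have hmin_le : min A B ≤ ((j : ℝ) * A + (k : ℝ) * B) / ((j : ℝ) + (k : ℝ)) :=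
    min_le_weightedMean (Nat.cast_nonneg j) (Nat.cast_nonneg k)
      (by exact_mod_cast Nat.add_pos_left hj1 k)
  refine ⟨hC_ge, hmin_le, fun hBA => ?_⟩
  rw [min_eq_right hBA.le] at hmin_le
  exact hmin_le.trans hC_ge

/-- with `A` the mean of the `j` largest `a`'s, `B` the mean of the `k` largest
`b`'s and `C` the mean of the `j+k` largest values of the combined list,
`C ≥ (jA + kB)/(j+k) ≥ min(A, B)`; in particular `A > B` implies `C ≥ B`. -/
theorem meanTopK_combined_ge {p q : ℕ} (a : Fin p → ℝ) (b : Fin q → ℝ)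
    (j k : ℕ) (hj1 : 1 ≤ j) (hjp : j ≤ p) (hk1 : 1 ≤ k) (hkq : k ≤ q)
    (A B C : ℝ)
    (hA : A = meanTopK (Multiset.map a Finset.univ.val) j)
    (hB : B = meanTopK (Multiset.map b Finset.univ.val) k)
    (hC : C = meanTopK (Multiset.map a Finset.univ.val + Multiset.map b Finset.univ.val)
      (j + k)) :
    ((j : ℝ) * A + (k : ℝ) * B) / ((j : ℝ) + (k : ℝ)) ≤ C ∧
    min A B ≤ ((j : ℝ) * A + (k : ℝ) * B) / ((j : ℝ) + (k : ℝ)) ∧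
    (B < A → B ≤ C) :=
  meanTopK_combined_ge_general a b j k hj1 hjp hkq A B C hA hB hC
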